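/- Let V be a k-module and A a Hopf χ-coalgebra. The trivial Hopf χ-module A⊗V = ({A_x ⊗ V}, {μ_x ⊗ id_V}, {Δ_{x,y} ⊗ id_V}, {φ_{x,e} ⊗ id_V}) is a Hopf χ-module over A, and its module of coinvariants (A⊗V)^{coA} is isomorphic as a k-module to V via v ↦ (1_x ⊗ v)_{x∈H}, with inverse (m_x)_{x∈H} ↦ (ε ⊗ id_V)(m_1). -/
import Mathlib


open TensorProduct

/-- Transport along an equality of indices. -/
def fcast (k : Type) [CommRing k] {ι : Type} (M : ι → Type)
    [∀ i, AddCommGroup (M i)] [∀ i, Module k (M i)] {x y : ι} (h : x = y) :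
    M x →ₗ[k] M y := by subst h; exact LinearMap.id

section TrivialHopfModule

variable {k : Type} [CommRing k] {E H : Type} [Group E] [Group H]
variable (χ : E →* H)
variable (A : H → Type) [∀ x, Ring (A x)] [∀ x, Algebra k (A x)]
variable (Δ : ∀ x y : H, A (x * y) →ₐ[k] A x ⊗[k] A y)
variable (φ : ∀ (x : H) (e : E), A x →ₐ[k] A (χ e * x))
variable (V : Type) [AddCommGroup V] [Module k V]

/-- Action of the trivial Hopf `χ`-module `A ⊗ V`: `r_x = μ_x ⊗ id_V`. -/
noncomputable def trivR (x : H) : A x ⊗[k] (A x ⊗[k] V) →ₗ[k] A x ⊗[k] V :=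
  (TensorProduct.map (LinearMap.mul' k (A x)) (LinearMap.id : V →ₗ[k] V)).comp
    (TensorProduct.assoc k (A x) (A x) V).symm.toLinearMap

/-- Coaction of the trivial Hopf `χ`-module `A ⊗ V`: `ρ_{x,y} = Δ_{x,y} ⊗ id_V`. -/
noncomputable def trivRho (x y : H) : A (x * y) ⊗[k] V →ₗ[k] A x ⊗[k] (A y ⊗[k] V) :=
  (TensorProduct.assoc k (A x) (A y) V).toLinearMap.comp
    (TensorProduct.map (Δ x y).toLinearMap (LinearMap.id : V →ₗ[k] V))

/-- `χ`-structure of the trivial Hopf `χ`-module `A ⊗ V`: `ψ_{x,e} = φ_{x,e} ⊗ id_V`. -/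
noncomputable def trivPsi (x : H) (e : E) : A x ⊗[k] V →ₗ[k] A (χ e * x) ⊗[k] V :=
  TensorProduct.map (φ x e).toLinearMap (LinearMap.id : V →ₗ[k] V)

end TrivialHopfModule

section Helpers

variable {k : Type} [CommRing k]

lemma assoc_tmul_right {M N V : Type} [AddCommGroup M] [AddCommGroup N] [AddCommGroup V]
    [Module k M] [Module k N] [Module k V] (u : M ⊗[k] N) (v : V) :
    (TensorProduct.assoc k M N V) (u ⊗ₜ[k] v)
      = TensorProduct.map LinearMap.id ((TensorProduct.mk k N V).flip v) u := by
  induction u using TensorProduct.induction_on with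
  | zero => simp
  | tmul a b => simp
  | add a b ha hb => simp [add_tmul, ha, hb]

lemma map_id_comp_apply {M N P V : Type} [AddCommGroup M] [AddCommGroup N] [AddCommGroup P]
    [AddCommGroup V] [Module k M] [Module k N] [Module k P] [Module k V]
    (g : N →ₗ[k] P) (h : M →ₗ[k] N) (u : V ⊗[k] M) :
    TensorProduct.map LinearMap.id (g ∘ₗ h) u
      = TensorProduct.map LinearMap.id g (TensorProduct.map LinearMap.id h u) := by
  induction u using TensorProduct.induction_on with
  | zero => simp
  | tmul a b => simp
  | add a b ha hb => simp [ha, hb]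

variable {E H : Type} [Group E] [Group H]
variable (χ : E →* H)
variable (A : H → Type) [∀ x, Ring (A x)] [∀ x, Algebra k (A x)]
variable (Δ : ∀ x y : H, A (x * y) →ₐ[k] A x ⊗[k] A y)
variable (φ : ∀ (x : H) (e : E), A x →ₐ[k] A (χ e * x))
variable (V : Type) [AddCommGroup V] [Module k V]

lemma fcast_rfl {x : H} : fcast k A (rfl : x = x) = LinearMap.id := rfl

lemma fcast_map (m : ∀ x : H, A x ⊗[k] V) {x y : H} (h : x = y) :
    TensorProduct.map (fcast k A h) (LinearMap.id : V →ₗ[k] V) (m x) = m y := by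
  subst h
  rw [fcast_rfl, TensorProduct.map_id, LinearMap.id_apply]

lemma trivR_tmul (x : H) (a b : A x) (v : V) :
    trivR A V x (a ⊗ₜ[k] (b ⊗ₜ[k] v)) = (a * b) ⊗ₜ[k] v := by
  simp [trivR, LinearMap.mul'_apply]

lemma trivRho_tmul (x y : H) (a : A (x * y)) (v : V) :
    trivRho A Δ V x y (a ⊗ₜ[k] v)
      = TensorProduct.map LinearMap.id ((TensorProduct.mk k (A y) V).flip v) (Δ x y a) := by
  simp [trivRho, assoc_tmul_right]

lemma trivPsi_tmul (x : H) (e : E) (a : A x) (v : V) :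
    trivPsi χ A φ V x e (a ⊗ₜ[k] v) = (φ x e a) ⊗ₜ[k] v := by
  simp [trivPsi]

end Helpers
set_option maxHeartbeats 1000000
set_option synthInstance.maxHeartbeats 400000
/-- For a `k`-module `V` and a Hopf `χ`-coalgebra `A`, the trivial Hopf `χ`-module
`A ⊗ V = ({A_x ⊗ V}, {μ_x ⊗ id_V}, {Δ_{x,y} ⊗ id_V}, {φ_{x,e} ⊗ id_V})` is a Hopf
`χ`-module over `A`, and its module of coinvariants is isomorphic to `V` via
`v ↦ (1_x ⊗ v)_x`, with inverse `(m_x)_x ↦ (ε ⊗ id_V)(m_1)`. -/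
theorem trivialHopfXiModule
    {k : Type} [CommRing k] {E H : Type} [Group E] [Group H]
    (χ : E →* H) (act : H →* MulAut E)
    (hequiv : ∀ (x : H) (e : E), χ (act x e) = x * χ e * x⁻¹)
    (hpeiffer : ∀ e f : E, act (χ e) f = e * f * e⁻¹)
    (A : H → Type) [∀ x, Ring (A x)] [∀ x, Algebra k (A x)]
    (Δ : ∀ x y : H, A (x * y) →ₐ[k] A x ⊗[k] A y)
    (ε : A 1 →ₐ[k] k)
    (coassoc : ∀ (x y z : H) (a : A (x * y * z)),
      (TensorProduct.assoc k (A x) (A y) (A z))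
        ((TensorProduct.map (Δ x y).toLinearMap (LinearMap.id : A z →ₗ[k] A z))
          (Δ (x*y) z a))
      = (TensorProduct.map (LinearMap.id : A x →ₗ[k] A x) (Δ y z).toLinearMap)
          (Δ x (y*z) (fcast k A (mul_assoc x y z) a)))
    (counit_left : ∀ (x : H) (a : A (1 * x)),
      (TensorProduct.lid k (A x))
        ((TensorProduct.map ε.toLinearMap (LinearMap.id : A x →ₗ[k] A x)) (Δ 1 x a))
      = fcast k A (one_mul x) a)
    (counit_right : ∀ (x : H) (a : A (x * 1)),
      (TensorProduct.rid k (A x))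
        ((TensorProduct.map (LinearMap.id : A x →ₗ[k] A x) ε.toLinearMap) (Δ x 1 a))
      = fcast k A (mul_one x) a)
    (S : ∀ x : H, A x⁻¹ →ₗ[k] A x)
    (Sbij : ∀ x : H, Function.Bijective (S x))
    (hS_left : ∀ (x : H) (a : A (x⁻¹ * x)),
      (LinearMap.mul' k (A x))
        ((TensorProduct.map (S x) (LinearMap.id : A x →ₗ[k] A x)) (Δ x⁻¹ x a))
      = algebraMap k (A x) (ε (fcast k A (inv_mul_cancel x) a)))
    (hS_right : ∀ (x : H) (a : A (x * x⁻¹)),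
      (LinearMap.mul' k (A x))
        ((TensorProduct.map (LinearMap.id : A x →ₗ[k] A x) (S x)) (Δ x x⁻¹ a))
      = algebraMap k (A x) (ε (fcast k A (mul_inv_cancel x) a)))
    (φ : ∀ (x : H) (e : E), A x →ₐ[k] A (χ e * x))
    (phi_one : ∀ (x : H) (a : A x),
      φ x 1 a = fcast k A (show x = χ (1 : E) * x by rw [map_one, one_mul]) a)
    (phi_comp : ∀ (x : H) (e f : E) (a : A x),
      φ (χ e * x) f (φ x e a)
        = fcast k A (show χ (f * e) * x = χ f * (χ e * x) by rw [map_mul, mul_assoc])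
            (φ x (f * e) a))
    (phi_delta : ∀ (x y : H) (e f : E) (a : A (x * y)),
      (TensorProduct.map (φ x e).toLinearMap (φ y f).toLinearMap) (Δ x y a)
        = Δ (χ e * x) (χ f * y)
            (fcast k A
              (show χ (e * act x f) * (x * y) = (χ e * x) * (χ f * y) by
                rw [map_mul, hequiv]; group)
              (φ (x * y) (e * act x f) a)))
    (V : Type) [AddCommGroup V] [Module k V] :
    -- (a) each A_x ⊗ V is an A_x-module via μ_x ⊗ id_V
    (∀ (x : H) (a b : A x) (m : A x ⊗[k] V),
      trivR A V x (a ⊗ₜ[k] trivR A V x (b ⊗ₜ[k] m)) = trivR A V x ((a * b) ⊗ₜ[k] m)) ∧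
    (∀ (x : H) (m : A x ⊗[k] V), trivR A V x ((1 : A x) ⊗ₜ[k] m) = m) ∧
    -- (b) (A ⊗ V, Δ ⊗ id_V) is an A-comodule: coassociativity
    (∀ (x y z : H) (m : A (x * y * z) ⊗[k] V),
      (TensorProduct.assoc k (A x) (A y) (A z ⊗[k] V))
        ((TensorProduct.map (Δ x y).toLinearMap (LinearMap.id : A z ⊗[k] V →ₗ[k] A z ⊗[k] V))
          (trivRho A Δ V (x * y) z m))
      = (TensorProduct.map (LinearMap.id : A x →ₗ[k] A x) (trivRho A Δ V y z))
          (trivRho A Δ V x (y * z)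
            ((TensorProduct.map (fcast k A (mul_assoc x y z)) (LinearMap.id : V →ₗ[k] V)) m))) ∧
    -- and counitality
    (∀ (x : H) (m : A (1 * x) ⊗[k] V),
      (TensorProduct.lid k (A x ⊗[k] V))
        ((TensorProduct.map ε.toLinearMap (LinearMap.id : A x ⊗[k] V →ₗ[k] A x ⊗[k] V))
          (trivRho A Δ V 1 x m))
      = (TensorProduct.map (fcast k A (one_mul x)) (LinearMap.id : V →ₗ[k] V)) m) ∧
    -- (c) the action and coaction intertwine
    (∀ (x y : H) (a : A (x * y)) (m : A (x * y) ⊗[k] V),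
      trivRho A Δ V x y (trivR A V (x * y) (a ⊗ₜ[k] m))
      = (TensorProduct.map (LinearMap.mul' k (A x)) (trivR A V y))
          ((TensorProduct.tensorTensorTensorComm k (A x) (A y) (A x) (A y ⊗[k] V))
            ((Δ x y a) ⊗ₜ[k] (trivRho A Δ V x y m)))) ∧
    -- (d) the ψ-axioms
    (∀ (x : H) (m : A x ⊗[k] V),
      trivPsi χ A φ V x 1 m
      = (TensorProduct.map (fcast k A (show x = χ (1 : E) * x by rw [map_one, one_mul]))
          (LinearMap.id : V →ₗ[k] V)) m) ∧
    (∀ (x : H) (e f : E) (m : A x ⊗[k] V),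
      trivPsi χ A φ V (χ e * x) f (trivPsi χ A φ V x e m)
      = (TensorProduct.map
          (fcast k A (show χ (f * e) * x = χ f * (χ e * x) by rw [map_mul, mul_assoc]))
          (LinearMap.id : V →ₗ[k] V)) (trivPsi χ A φ V x (f * e) m)) ∧
    (∀ (x : H) (e : E) (a : A x) (m : A x ⊗[k] V),
      trivPsi χ A φ V x e (trivR A V x (a ⊗ₜ[k] m))
      = trivR A V (χ e * x) ((φ x e a) ⊗ₜ[k] trivPsi χ A φ V x e m)) ∧
    (∀ (x y : H) (e f : E) (m : A (x * y) ⊗[k] V),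
      (TensorProduct.map (φ x e).toLinearMap (trivPsi χ A φ V y f)) (trivRho A Δ V x y m)
      = trivRho A Δ V (χ e * x) (χ f * y)
          ((TensorProduct.map
              (fcast k A (show χ (e * act x f) * (x * y) = (χ e * x) * (χ f * y) by
                rw [map_mul, hequiv]; group))
              (LinearMap.id : V →ₗ[k] V))
            (trivPsi χ A φ V (x * y) (e * act x f) m))) ∧
    -- (e) the coinvariants of A ⊗ V are isomorphic to V via v ↦ (1_x ⊗ v)_x:
    -- each family (1_x ⊗ v)_x is coinvariant,
    (∀ v : V,
      (∀ x y : H, trivRho A Δ V x y ((1 : A (x * y)) ⊗ₜ[k] v)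
        = (1 : A x) ⊗ₜ[k] ((1 : A y) ⊗ₜ[k] v)) ∧
      (∀ (x : H) (e : E), trivPsi χ A φ V x e ((1 : A x) ⊗ₜ[k] v)
        = (1 : A (χ e * x)) ⊗ₜ[k] v)) ∧
    -- the composite with (ε ⊗ id_V) at degree 1 is the identity of V,
    (∀ v : V,
      (TensorProduct.lid k V)
        ((TensorProduct.map ε.toLinearMap (LinearMap.id : V →ₗ[k] V)) ((1 : A 1) ⊗ₜ[k] v))
      = v) ∧
    -- and every coinvariant family is of the form (1_x ⊗ v)_x for v = (ε ⊗ id_V)(m_1)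
    (∀ m : ∀ x : H, A x ⊗[k] V,
      (∀ x y : H, trivRho A Δ V x y (m (x * y)) = (1 : A x) ⊗ₜ[k] m y) →
      (∀ (x : H) (e : E), trivPsi χ A φ V x e (m x) = m (χ e * x)) →
      ∀ x : H, m x = (1 : A x) ⊗ₜ[k]
        ((TensorProduct.lid k V)
          ((TensorProduct.map ε.toLinearMap (LinearMap.id : V →ₗ[k] V)) (m 1)))) := by
  set_option linter.unusedSectionVars false in
  refine ⟨?_, ?_, ?_, ?_, ?_, ?_, ?_, ?_, ?_, ?_, ?_, ?_⟩
  -- (a1) associativity of the action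
  · intro x a b m
    induction m using TensorProduct.induction_on with
    | zero => simp
    | tmul c v => simp [trivR_tmul, mul_assoc]
    | add m₁ m₂ h₁ h₂ => simp only [tmul_add, map_add, h₁, h₂]
  -- (a2) unitality of the action
  · intro x m
    induction m using TensorProduct.induction_on with
    | zero => simp
    | tmul c v => simp [trivR_tmul]
    | add m₁ m₂ h₁ h₂ => simp only [tmul_add, map_add, h₁, h₂]
  -- (b) coassociativity
  · intro x y z m
    induction m using TensorProduct.induction_on with
    | zero => simp
    | tmul a v =>
        have claim1 : ∀ w : A (x * y) ⊗[k] A z,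
            (TensorProduct.assoc k (A x) (A y) (A z ⊗[k] V))
              ((TensorProduct.map (Δ x y).toLinearMap
                (LinearMap.id : A z ⊗[k] V →ₗ[k] A z ⊗[k] V))
                (TensorProduct.map LinearMap.id ((TensorProduct.mk k (A z) V).flip v) w))
            = TensorProduct.map LinearMap.id
                (TensorProduct.map LinearMap.id ((TensorProduct.mk k (A z) V).flip v))
                ((TensorProduct.assoc k (A x) (A y) (A z))
                  ((TensorProduct.map (Δ x y).toLinearMap
                    (LinearMap.id : A z →ₗ[k] A z)) w)) := by
          intro w
          induction w using TensorProduct.induction_on with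
          | zero => simp
          | tmul b c =>
              simp only [TensorProduct.map_tmul, LinearMap.id_apply, LinearMap.flip_apply,
                TensorProduct.mk_apply, assoc_tmul_right, ← map_id_comp_apply]
              congr 1
          | add w₁ w₂ h₁ h₂ => simp only [map_add, h₁, h₂]
        have claim2 : ∀ w' : A x ⊗[k] A (y * z),
            TensorProduct.map (LinearMap.id : A x →ₗ[k] A x) (trivRho A Δ V y z)
              (TensorProduct.map LinearMap.id ((TensorProduct.mk k (A (y * z)) V).flip v) w')
            = TensorProduct.map LinearMap.id
                (TensorProduct.map LinearMap.id ((TensorProduct.mk k (A z) V).flip v))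
                (TensorProduct.map LinearMap.id (Δ y z).toLinearMap w') := by
          intro w'
          rw [← map_id_comp_apply, ← map_id_comp_apply]
          congr 1
          ext d
          simp [trivRho_tmul]
        rw [trivRho_tmul, TensorProduct.map_tmul, LinearMap.id_apply, trivRho_tmul,
          claim1, claim2, coassoc]
    | add m₁ m₂ h₁ h₂ => simp only [map_add, h₁, h₂]
  -- (b) counitality
  · intro x m
    induction m using TensorProduct.induction_on with
    | zero => simp
    | tmul a v =>
        have claim : ∀ u : A 1 ⊗[k] A x,
            (TensorProduct.lid k (A x ⊗[k] V))
              ((TensorProduct.map ε.toLinearMap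
                (LinearMap.id : A x ⊗[k] V →ₗ[k] A x ⊗[k] V))
                (TensorProduct.map LinearMap.id ((TensorProduct.mk k (A x) V).flip v) u))
            = ((TensorProduct.mk k (A x) V).flip v)
                ((TensorProduct.lid k (A x))
                  ((TensorProduct.map ε.toLinearMap (LinearMap.id : A x →ₗ[k] A x)) u)) := by
          intro u
          induction u using TensorProduct.induction_on with
          | zero => simp
          | tmul p q => simp [smul_tmul']
          | add u₁ u₂ h₁ h₂ => simp only [map_add, h₁, h₂]
        rw [trivRho_tmul, claim, counit_left, TensorProduct.map_tmul, LinearMap.id_apply]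
        simp
    | add m₁ m₂ h₁ h₂ => simp only [map_add, h₁, h₂]
  -- (c) action/coaction compatibility
  · intro x y a m
    induction m using TensorProduct.induction_on with
    | zero => simp
    | tmul b v =>
        rw [trivR_tmul, trivRho_tmul, trivRho_tmul, map_mul]
        generalize (Δ x y) a = u
        generalize (Δ x y) b = u'
        induction u using TensorProduct.induction_on with
        | zero => simp [zero_tmul]
        | tmul p q =>
            induction u' using TensorProduct.induction_on with
            | zero => simp [tmul_zero]
            | tmul p' q' =>
                simp [Algebra.TensorProduct.tmul_mul_tmul, trivR_tmul,
                  LinearMap.mul'_apply, TensorProduct.tensorTensorTensorComm_tmul]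
            | add u₁ u₂ h₁ h₂ =>
                simp only [mul_add, map_add, tmul_add, h₁, h₂]
        | add u₁ u₂ h₁ h₂ =>
            simp only [add_mul, map_add, add_tmul, h₁, h₂]
    | add m₁ m₂ h₁ h₂ => simp only [tmul_add, map_add, h₁, h₂]
  -- (d1) ψ_{x,1} = id
  · intro x m
    induction m using TensorProduct.induction_on with
    | zero => simp
    | tmul a v => rw [trivPsi_tmul, phi_one, TensorProduct.map_tmul, LinearMap.id_apply]
    | add m₁ m₂ h₁ h₂ => simp only [map_add, h₁, h₂]
  -- (d2) ψ composition
  · intro x e f m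
    induction m using TensorProduct.induction_on with
    | zero => simp
    | tmul a v =>
        rw [trivPsi_tmul, trivPsi_tmul, trivPsi_tmul, phi_comp, TensorProduct.map_tmul,
          LinearMap.id_apply]
    | add m₁ m₂ h₁ h₂ => simp only [map_add, h₁, h₂]
  -- (d3) ψ vs action
  · intro x e a m
    induction m using TensorProduct.induction_on with
    | zero => simp
    | tmul b v => rw [trivR_tmul, trivPsi_tmul, trivPsi_tmul, trivR_tmul, map_mul]
    | add m₁ m₂ h₁ h₂ => simp only [tmul_add, map_add, h₁, h₂]
  -- (d4) ψ vs coaction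
  · intro x y e f m
    induction m using TensorProduct.induction_on with
    | zero => simp
    | tmul a v =>
        have claim : ∀ u : A x ⊗[k] A y,
            TensorProduct.map (φ x e).toLinearMap (trivPsi χ A φ V y f)
              (TensorProduct.map LinearMap.id ((TensorProduct.mk k (A y) V).flip v) u)
            = TensorProduct.map LinearMap.id
                ((TensorProduct.mk k (A (χ f * y)) V).flip v)
                (TensorProduct.map (φ x e).toLinearMap (φ y f).toLinearMap u) := by
          intro u
          induction u using TensorProduct.induction_on with
          | zero => simp
          | tmul p q => simp [trivPsi_tmul]
          | add u₁ u₂ h₁ h₂ => simp only [map_add, h₁, h₂]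
        rw [trivRho_tmul, claim, phi_delta, trivPsi_tmul, TensorProduct.map_tmul,
          LinearMap.id_apply, trivRho_tmul]
    | add m₁ m₂ h₁ h₂ => simp only [map_add, h₁, h₂]
  -- (e1) families (1 ⊗ v) are coinvariant
  · intro v
    constructor
    · intro x y
      rw [trivRho_tmul, map_one, Algebra.TensorProduct.one_def, TensorProduct.map_tmul]
      simp
    · intro x e
      rw [trivPsi_tmul, map_one]
  -- (e2) ε ∘ unit = id
  · intro v
    simp
  -- (e3) every coinvariant family is of the form (1 ⊗ v)
  · intro m h1 h2 x
    have hρ := h1 x 1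
    have claim : ∀ mm : A (x * 1) ⊗[k] V,
        TensorProduct.map (LinearMap.id : A x →ₗ[k] A x)
          ((TensorProduct.lid k V).toLinearMap ∘ₗ
            TensorProduct.map ε.toLinearMap (LinearMap.id : V →ₗ[k] V))
          (trivRho A Δ V x 1 mm)
        = TensorProduct.map (fcast k A (mul_one x)) (LinearMap.id : V →ₗ[k] V) mm := by
      intro mm
      induction mm using TensorProduct.induction_on with
      | zero => simp
      | tmul a u =>
          rw [trivRho_tmul, ← map_id_comp_apply]
          have sub : ∀ w : A x ⊗[k] A 1,
              TensorProduct.map LinearMap.id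
                (((TensorProduct.lid k V).toLinearMap ∘ₗ
                  TensorProduct.map ε.toLinearMap (LinearMap.id : V →ₗ[k] V)) ∘ₗ
                  ((TensorProduct.mk k (A 1) V).flip u)) w
              = ((TensorProduct.mk k (A x) V).flip u)
                  ((TensorProduct.rid k (A x))
                    (TensorProduct.map LinearMap.id ε.toLinearMap w)) := by
            intro w
            induction w using TensorProduct.induction_on with
            | zero => simp
            | tmul p q => simp [smul_tmul', tmul_smul]
            | add w₁ w₂ h₁ h₂ => simp only [map_add, h₁, h₂]
          rw [sub, counit_right]
          simp
      | add m₁ m₂ h₁ h₂ => simp only [map_add, h₁, h₂]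
    have h3 := congrArg (TensorProduct.map (LinearMap.id : A x →ₗ[k] A x)
        ((TensorProduct.lid k V).toLinearMap ∘ₗ
          TensorProduct.map ε.toLinearMap (LinearMap.id : V →ₗ[k] V))) hρ
    rw [claim, fcast_map A V m (mul_one x), TensorProduct.map_tmul, LinearMap.id_apply] at h3
    rw [h3]
    simp
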